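/- arXiv:2201.10535 — 3 statements merged into one kernel-verified Lean document; each statement's English description precedes it below -/
import Mathlib

section
/- Let H be a complex Hilbert space, let V : H → H be a bounded isometry, and let f, g ∈ H. Then V + f⊗g is NOT left-invertible if and only if ‖V*f‖ = ‖f‖ and ⟨V*f, g⟩ = −1. -/
/-!
Put `u = V* f`. As `V V*` is the orthogonal projection onto the range of `V`,
`‖f - V u‖² = ‖f‖² - ‖u‖²`, so `‖u‖ = ‖f‖` means `f = V u`; together with `⟨u, g⟩ = -1` this
gives `(V + f ⊗ g) u = f - f = 0` with `u ≠ 0`. Conversely, if `⟨u, g⟩ ≠ -1` then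
`V* (V + f ⊗ g) = 1 + u ⊗ g` has the Sherman–Morrison left inverse
`1 - (1 + ⟨u, g⟩)⁻¹ u ⊗ g`; and if `f ≠ V u` then `w = f - V u` is a nonzero vector orthogonal
to the range of `V` with `⟨f, w⟩ = ‖w‖²`, so `V* - ‖w‖⁻² u ⊗ w` kills `f ⊗ g` and is a left
inverse of `V + f ⊗ g`.
-/

open ContinuousLinearMap

/-- The rank-one operator `f ⊗ g : h ↦ ⟨h, g⟩ f` (inner product linear in the
first argument, i.e. `⟪g, h⟫ • f` in Mathlib's convention). -/
noncomputable def rankOne {H : Type*} [NormedAddCommGroup H] [InnerProductSpace ℂ H]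
    (f g : H) : H →L[ℂ] H :=
  (innerSL ℂ g).smulRight f

theorem not_exists_comp_eq_one_of_apply_eq_zero {R M : Type*} [Semiring R] [TopologicalSpace M]
    [AddCommMonoid M] [Module R M] {T : M →L[R] M} {x : M} (hTx : T x = 0) (hx : x ≠ 0) :
    ¬∃ S : M →L[R] M, S ∘L T = 1 := by
  rintro ⟨S, hS⟩
  exact hx (by simpa [hTx] using congr($hS x).symm)

section RankOne

variable {H : Type*} [NormedAddCommGroup H] [InnerProductSpace ℂ H]

theorem comp_rankOne (A : H →L[ℂ] H) (f g : H) : A ∘L rankOne f g = rankOne (A f) g :=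
  InnerProductSpace.comp_rankOne f g A

theorem rankOne_comp [CompleteSpace H] (f g : H) (A : H →L[ℂ] H) :
    rankOne f g ∘L A = rankOne f (adjoint A g) :=
  InnerProductSpace.rankOne_comp f g A

theorem rankOne_comp_rankOne (f g u w : H) :
    rankOne f g ∘L rankOne u w = inner ℂ g u • rankOne f w :=
  InnerProductSpace.rankOne_comp_rankOne f g u w

theorem rankOne_zero_right (f : H) : rankOne f 0 = 0 :=
  (InnerProductSpace.rankOne ℂ f).map_zero

theorem one_sub_smul_rankOne_comp_one_add_rankOne (u g : H) (h : inner ℂ g u ≠ -1) :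
    (1 - (1 + inner ℂ g u)⁻¹ • rankOne u g) ∘L (1 + rankOne u g) = 1 := by
  have h' : 1 + inner ℂ g u ≠ 0 := fun h0 => h (eq_neg_of_add_eq_zero_right h0)
  rw [← mul_def, sub_mul, one_mul, mul_add, mul_one, smul_mul_assoc, mul_def, rankOne_comp_rankOne,
    smul_smul, ← add_smul, ← mul_one_add, inv_mul_cancel₀ h', one_smul,
    add_sub_cancel_right]

theorem exists_comp_add_rankOne_eq_one_of_inner_ne_neg_one {A S : H →L[ℂ] H} (hS : S ∘L A = 1) (f g : H)
    (h : inner ℂ g (S f) ≠ -1) : ∃ S' : H →L[ℂ] H, S' ∘L (A + rankOne f g) = 1 :=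
  ⟨(1 - (1 + inner ℂ g (S f))⁻¹ • rankOne (S f) g) ∘L S, by
    rw [comp_assoc, comp_add, hS, comp_rankOne,
      one_sub_smul_rankOne_comp_one_add_rankOne _ _ h]⟩

end RankOne

section Isometry

variable {𝕜 E F : Type*} [RCLike 𝕜] [NormedAddCommGroup E] [InnerProductSpace 𝕜 E]
  [CompleteSpace E] [NormedAddCommGroup F] [InnerProductSpace 𝕜 F] [CompleteSpace F]
  {V : E →L[𝕜] F}

theorem adjoint_sub_apply_adjoint_apply (hV : adjoint V ∘L V = 1) (f : F) :
    adjoint V (f - V (adjoint V f)) = 0 := by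
  rw [map_sub, ← comp_apply (adjoint V) V, hV, one_apply_eq_self, sub_self]

theorem norm_sub_apply_adjoint_apply_sq (hV : adjoint V ∘L V = 1) (f : F) :
    ‖f - V (adjoint V f)‖ ^ 2 = ‖f‖ ^ 2 - ‖adjoint V f‖ ^ 2 := by
  have horth : inner 𝕜 (f - V (adjoint V f)) (V (adjoint V f)) = 0 := by
    rw [← adjoint_inner_left, adjoint_sub_apply_adjoint_apply hV, inner_zero_left]
  have hpyth := norm_add_sq_eq_norm_sq_add_norm_sq_of_inner_eq_zero _ _ horth
  rw [sub_add_cancel, (norm_map_iff_adjoint_comp_self V).mpr hV] at hpyth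
  linarith

theorem apply_adjoint_apply_eq_self_iff (hV : adjoint V ∘L V = 1) (f : F) :
    V (adjoint V f) = f ↔ ‖adjoint V f‖ = ‖f‖ := by
  rw [eq_comm, ← sub_eq_zero, ← norm_eq_zero, ← pow_eq_zero_iff two_ne_zero,
    norm_sub_apply_adjoint_apply_sq hV, sub_eq_zero, sq_eq_sq₀ (norm_nonneg _) (norm_nonneg _),
    eq_comm]

end Isometry

theorem exists_comp_add_rankOne_eq_one_of_apply_adjoint_apply_ne {H : Type*} [NormedAddCommGroup H]
    [InnerProductSpace ℂ H] [CompleteSpace H] {V : H →L[ℂ] H} (hV : adjoint V ∘L V = 1) {f : H}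
    (hf : V (adjoint V f) ≠ f) (g : H) : ∃ S : H →L[ℂ] H, S ∘L (V + rankOne f g) = 1 := by
  set u := adjoint V f
  set w := f - V u
  have hVw : adjoint V w = 0 := adjoint_sub_apply_adjoint_apply hV f
  have hwVu : inner ℂ w (V u) = 0 := by rw [← adjoint_inner_left, hVw, inner_zero_left]
  have hwf : inner ℂ w f = inner ℂ w w := by
    rw [← sub_zero (inner ℂ w f), ← hwVu, ← inner_sub_right]
  have hw : inner ℂ w w ≠ 0 := inner_self_ne_zero.mpr (sub_ne_zero.mpr hf.symm)
  refine ⟨adjoint V - (inner ℂ w w)⁻¹ • rankOne u w, ?_⟩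
  rw [comp_add, sub_comp, hV, smul_comp, rankOne_comp, hVw, sub_comp, comp_rankOne, smul_comp,
    rankOne_comp_rankOne, hwf, smul_smul, inv_mul_cancel₀ hw, one_smul, rankOne_zero_right,
    smul_zero, sub_zero, sub_self (rankOne u g), add_zero]

/-- **Corollary.** For an isometry `V`, the perturbation `V + f ⊗ g` fails to be
left-invertible iff `‖V*f‖ = ‖f‖` and `⟨V*f, g⟩ = -1`. -/
theorem not_leftInvertible_rankOne_perturbation_iff
    {H : Type*} [NormedAddCommGroup H] [InnerProductSpace ℂ H] [CompleteSpace H]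
    (V : H →L[ℂ] H) (hV : (adjoint V) ∘L V = 1) (f g : H) :
    (¬ ∃ S : H →L[ℂ] H, S ∘L (V + rankOne f g) = 1) ↔
      (‖adjoint V f‖ = ‖f‖ ∧ (inner ℂ g (adjoint V f) : ℂ) = -1) := by
  rw [← apply_adjoint_apply_eq_self_iff hV]
  constructor
  · contrapose!
    intro h
    by_cases hf : V (adjoint V f) = f
    · exact exists_comp_add_rankOne_eq_one_of_inner_ne_neg_one hV f g (h hf)
    · exact exists_comp_add_rankOne_eq_one_of_apply_adjoint_apply_ne hV hf g
  · rintro ⟨hf, hg⟩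
    refine not_exists_comp_eq_one_of_apply_eq_zero (x := adjoint V f) ?_ ?_
    · simp [rankOne, hf, hg]
    · rintro hu
      simp [hu] at hg
end

section
/- Let H be a complex Hilbert space, let V : H → H be a pure isometry, let f₀ ∈ ker V*, and let m, n be nonnegative integers with m > n + 1. Then for f = Vᵐ f₀ and g = Vⁿ f₀ one has c(V;f,g) = 1, and the operator S = V + f⊗g is both analytic and left-invertible. -/
open ContinuousLinearMap

/-!
The vectors `Vʲ f₀` are pairwise orthogonal because `f₀ ∈ ker V*`. Writing `S = V + f ⊗ g`,
induction on `j` shows that `S^(j+1) H ⊥ Vʲ f₀` for `j ≤ n`, since `f ⊥ Vʲ f₀` and `V` preserves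
inner products. Hence `S^(n+1) H ⊥ g`, and `S` agrees with `V` on `g^⊥`, so
`S^(n+1+k) = Vᵏ S^(n+1)`: the ranges of the powers of `S` shrink to `⋂ₖ Vᵏ H = {0}`.
The vector `u = V* f = Vᵐ⁻¹ f₀` has the norm of `f` and is orthogonal to `g`, which gives
`c(V;f,g) = 1`, and `V* S = 1 + u ⊗ g` is inverted from the left by `1 - u ⊗ g`.
-/

section RankOnePerturbation

variable {H : Type*} [NormedAddCommGroup H] [InnerProductSpace ℂ H] {V : H →L[ℂ] H}

@[simp]
lemma rankOne_apply (f g x : H) : rankOne f g x = inner ℂ g x • f :=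
  rfl

lemma add_rankOne_pow_add_eq_pow_mul_add_rankOne_pow {f g : H} {p : ℕ}
    (hg : ∀ y : H, inner ℂ g (((V + rankOne f g) ^ p) y) = 0) (k : ℕ) :
    (V + rankOne f g) ^ (p + k) = V ^ k * (V + rankOne f g) ^ p := by
  induction k with
  | zero => simp
  | succ k ih =>
    ext y
    have hperp : inner ℂ g (((V + rankOne f g) ^ (p + k)) y) = 0 := by
      rw [pow_add, mul_apply_eq_comp]
      exact hg _
    rw [← add_assoc, pow_succ', mul_apply_eq_comp, add_apply, rankOne_apply, hperp, zero_smul,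
      add_zero, ih, pow_succ' V, mul_assoc]
    rfl

lemma iInter_range_add_rankOne_pow_subset {f g : H} {p : ℕ}
    (hg : ∀ y : H, inner ℂ g (((V + rankOne f g) ^ p) y) = 0) :
    (⋂ k : ℕ, Set.range ⇑((V + rankOne f g) ^ k)) ⊆ ⋂ k : ℕ, Set.range ⇑(V ^ k) := by
  intro x hx
  refine Set.mem_iInter.mpr fun k => ?_
  obtain ⟨y, rfl⟩ := Set.mem_iInter.mp hx (p + k)
  rw [add_rankOne_pow_add_eq_pow_mul_add_rankOne_pow hg, mul_apply_eq_comp]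
  exact Set.mem_range_self _

variable [CompleteSpace H]

lemma adjoint_apply_apply_of_adjoint_comp_self (hV : adjoint V ∘L V = 1) (x : H) :
    adjoint V (V x) = x :=
  DFunLike.congr_fun hV x

lemma inner_pow_apply_pow_apply (hV : adjoint V ∘L V = 1) (k : ℕ) (x y : H) :
    inner ℂ ((V ^ k) x) ((V ^ k) y) = inner ℂ x y := by
  induction k generalizing x y with
  | zero => simp
  | succ k ih =>
    rw [pow_succ', mul_apply_eq_comp, mul_apply_eq_comp,
      (inner_map_map_iff_adjoint_comp_self V).mpr hV, ih]

lemma norm_pow_apply (hV : adjoint V ∘L V = 1) (k : ℕ) (x : H) : ‖(V ^ k) x‖ = ‖x‖ :=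
  (LinearMap.norm_map_iff_inner_map_map (V ^ k)).mpr (inner_pow_apply_pow_apply hV k) x

lemma inner_pow_apply_pow_apply_eq_zero_of_lt (hV : adjoint V ∘L V = 1) {f₀ : H}
    (hf₀ : adjoint V f₀ = 0) {a b : ℕ} (hab : a < b) :
    inner ℂ ((V ^ a) f₀) ((V ^ b) f₀) = 0 := by
  obtain ⟨d, rfl⟩ : ∃ d, b = a + (d + 1) := ⟨b - a - 1, by omega⟩
  rw [pow_add, mul_apply_eq_comp, inner_pow_apply_pow_apply hV, pow_succ', mul_apply_eq_comp,
    ← adjoint_inner_left, hf₀, inner_zero_left]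

lemma inner_pow_apply_add_rankOne_pow_succ_apply_eq_zero (hV : adjoint V ∘L V = 1) {f₀ f : H}
    (hf₀ : adjoint V f₀ = 0) (g : H) {n : ℕ} (hf : ∀ j ≤ n, inner ℂ ((V ^ j) f₀) f = 0) (y : H) :
    inner ℂ ((V ^ n) f₀) (((V + rankOne f g) ^ (n + 1)) y) = 0 := by
  induction n with
  | zero =>
    have hf₀f : inner ℂ f₀ f = 0 := by simpa using hf 0 le_rfl
    simp [← adjoint_inner_left, hf₀, hf₀f]
  | succ n ih =>
    rw [pow_succ' (V + rankOne f g), mul_apply_eq_comp, add_apply, rankOne_apply, inner_add_right,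
      inner_smul_right, hf (n + 1) le_rfl, mul_zero, add_zero, pow_succ' V, mul_apply_eq_comp,
      ← adjoint_inner_left, adjoint_apply_apply_of_adjoint_comp_self hV]
    exact ih fun j hj => hf j (by omega)

lemma one_sub_rankOne_comp_adjoint_comp_add_rankOne (hV : adjoint V ∘L V = 1) {f g : H}
    (hfg : inner ℂ g (adjoint V f) = 0) :
    ((1 - rankOne (adjoint V f) g) ∘L adjoint V) ∘L (V + rankOne f g) = 1 := by
  ext y
  simp [adjoint_apply_apply_of_adjoint_comp_self hV, hfg]

end RankOnePerturbation

/-- **Proposition.** If `V` is a pure isometry, `f₀ ∈ ker V*` and `m > n + 1`,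
then with `f = Vᵐ f₀` and `g = Vⁿ f₀` one has `c(V;f,g) = 1`, and
`S = V + f ⊗ g` is analytic and left-invertible (a shift). -/
theorem shift_of_rankOne_perturbation_pure_isometry
    {H : Type*} [NormedAddCommGroup H] [InnerProductSpace ℂ H] [CompleteSpace H]
    (V : H →L[ℂ] H) (hV : (adjoint V) ∘L V = 1)
    (hpure : (⋂ k : ℕ, Set.range ⇑(V ^ k)) = {0})
    (f₀ : H) (hf₀ : adjoint V f₀ = 0) (m n : ℕ) (hmn : n + 1 < m)
    (f g : H) (hf : f = (V ^ m) f₀) (hg : g = (V ^ n) f₀) :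
    ((‖f‖ ^ 2 - ‖adjoint V f‖ ^ 2) * ‖g‖ ^ 2
        + ‖(1 : ℂ) + (inner ℂ g (adjoint V f) : ℂ)‖ ^ 2 = 1)
      ∧ (⋂ k : ℕ, Set.range ⇑((V + rankOne f g) ^ k)) = {0}
      ∧ (∃ S : H →L[ℂ] H, S ∘L (V + rankOne f g) = 1) := by
  obtain ⟨m, rfl⟩ : ∃ m', m = m' + 1 := ⟨m - 1, by omega⟩
  have hVf : adjoint V f = (V ^ m) f₀ := by
    rw [hf, pow_succ', mul_apply_eq_comp, adjoint_apply_apply_of_adjoint_comp_self hV]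
  have hgVf : inner ℂ g (adjoint V f) = 0 := by
    rw [hg, hVf]
    exact inner_pow_apply_pow_apply_eq_zero_of_lt hV hf₀ (by omega)
  have hg_perp : ∀ y, inner ℂ g (((V + rankOne f g) ^ (n + 1)) y) = 0 := by
    subst hg
    refine inner_pow_apply_add_rankOne_pow_succ_apply_eq_zero hV hf₀ _ (fun j hj => ?_)
    rw [hf]
    exact inner_pow_apply_pow_apply_eq_zero_of_lt hV hf₀ (by omega)
  refine ⟨?_, ?_, ⟨_, one_sub_rankOne_comp_adjoint_comp_add_rankOne hV hgVf⟩⟩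
  · rw [hgVf, hVf, hf, norm_pow_apply hV, norm_pow_apply hV]
    simp
  · exact (hpure ▸ iInter_range_add_rankOne_pow_subset hg_perp).antisymm
      (Set.singleton_subset_iff.mpr (Set.mem_iInter.mpr fun k => ⟨0, map_zero _⟩))
end

section
/- Let H be a separable complex Hilbert space with orthonormal basis (e_n)_{n≥0}, let D ∈ B(H) be the diagonal operator D e_n = α_n e_n with all α_n ≠ 0, and let f = Σ a_n e_n and g = Σ b_n e_n with a_n ≠ 0 and b_n ≠ 0 for all n. Then T = D + f⊗g is left-invertible if and only if T is invertible (i.e., has a two-sided bounded inverse). -/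
/-!
If `S ∘ T = 1`, then `T† ∘ S† = 1`, so `T†` is surjective, and `T ∘ S = 1` as soon as `T†` is
injective. Here `T† = D† + g ⊗ f` is a rank-one perturbation of `D†`, which is injective because
`D` has dense range (its range contains every `e n`). A surjective rank-one perturbation
`A + φ(·) w` of an injective map `A` is injective: a nonzero kernel vector `h` has `φ h ≠ 0`, so
correcting a preimage of any `A z` by a multiple of `h` gives a preimage in `ker φ`, where the
perturbation agrees with `A`; hence that preimage is `z`, and `φ z = 0` for all `z`.
-/

open ContinuousLinearMap

theorem LinearMap.injective_add_smulRight_of_surjective {K V W : Type*} [Field K]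
    [AddCommGroup V] [Module K V] [AddCommGroup W] [Module K W]
    {A : V →ₗ[K] W} (hA : Function.Injective A) (φ : V →ₗ[K] K) (w : W)
    (hsurj : Function.Surjective (A + φ.smulRight w)) :
    Function.Injective (A + φ.smulRight w) := by
  set R := A + φ.smulRight w
  have hR : ∀ x, R x = A x + φ x • w := fun _ => rfl
  refine (injective_iff_map_eq_zero R).2 fun h hRh => ?_
  have hφh : φ h = 0 := by
    by_contra hφh
    suffices hφ : φ = 0 by simp [hφ] at hφh
    ext z
    obtain ⟨x, hx⟩ := hsurj (A z)
    set y := x - (φ x / φ h) • h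
    have hφy : φ y = 0 := by simp [y, div_mul_cancel₀ _ hφh]
    have hRy : R y = A z := by simp [y, hRh, hx]
    have : y = z := hA (by simpa [hR, hφy] using hRy)
    simpa [← this] using hφy
  exact (injective_iff_map_eq_zero A).1 hA h (by simpa [hR, hφh] using hRh)

section Adjoint

variable {𝕜 E F : Type*} [RCLike 𝕜]
  [NormedAddCommGroup E] [InnerProductSpace 𝕜 E] [CompleteSpace E]
  [NormedAddCommGroup F] [InnerProductSpace 𝕜 F] [CompleteSpace F]

theorem ContinuousLinearMap.injective_adjoint_of_forall_mem_range {ι : Type*}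
    (e : HilbertBasis ι 𝕜 F) {T : E →L[𝕜] F} (he : ∀ i, e i ∈ T.range) :
    Function.Injective (adjoint T) := by
  have hspan : Submodule.span 𝕜 (Set.range e) ≤ T.range :=
    Submodule.span_le.2 (Set.range_subset_iff.2 he)
  have hdense : T.range.topologicalClosure = ⊤ :=
    top_le_iff.1 (e.dense_span ▸ Submodule.topologicalClosure_mono hspan)
  rw [Submodule.topologicalClosure_eq_top_iff, orthogonal_range] at hdense
  exact LinearMap.ker_eq_bot.1 hdense

theorem ContinuousLinearMap.comp_eq_one_of_comp_eq_one_of_injective_adjoint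
    {S : F →L[𝕜] E} {T : E →L[𝕜] F}
    (hST : S ∘L T = 1) (hT : Function.Injective (adjoint T)) : T ∘L S = 1 := by
  have hright : adjoint T ∘L adjoint S = 1 := by
    rw [← adjoint_comp, hST, adjoint_one]
  have hleft : adjoint S ∘L adjoint T = 1 := by
    ext x
    exact hT (by simpa using congrArg (· (adjoint T x)) hright)
  simpa [← adjoint_comp, adjoint_one] using congrArg adjoint hleft

end Adjoint

theorem adjoint_rankOne {H : Type*} [NormedAddCommGroup H] [InnerProductSpace ℂ H]
    [CompleteSpace H] (f g : H) : adjoint (rankOne f g) = rankOne g f :=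
  InnerProductSpace.adjoint_rankOne f g

theorem leftInvertible_iff_invertible_diagonal_rankOne_general
    {H : Type*} [NormedAddCommGroup H] [InnerProductSpace ℂ H] [CompleteSpace H]
    (e : HilbertBasis ℕ ℂ H) (α : ℕ → ℂ) (hα : ∀ n, α n ≠ 0)
    (D : H →L[ℂ] H) (hD : ∀ n, D (e n) = α n • e n)
    (f g : H) :
    (∃ S : H →L[ℂ] H, S ∘L (D + rankOne f g) = 1) ↔
      (∃ S : H →L[ℂ] H, S ∘L (D + rankOne f g) = 1 ∧ (D + rankOne f g) ∘L S = 1) := by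
  refine ⟨fun ⟨S, hS⟩ => ⟨S, hS, comp_eq_one_of_comp_eq_one_of_injective_adjoint hS ?_⟩,
    fun ⟨S, hS, _⟩ => ⟨S, hS⟩⟩
  have hD_adj : Function.Injective (adjoint D) :=
    injective_adjoint_of_forall_mem_range e fun n =>
      ⟨(α n)⁻¹ • e n, by simp [hD, smul_smul, hα]⟩
  have hT_adj : adjoint (D + rankOne f g) = adjoint D + rankOne g f := by
    rw [map_add, adjoint_rankOne]
  have hsurj : Function.Surjective (adjoint (D + rankOne f g)) := by
    have : adjoint (D + rankOne f g) ∘L adjoint S = 1 := by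
      rw [← adjoint_comp, hS, adjoint_one]
    exact fun y => ⟨adjoint S y, by simpa using congrArg (· y) this⟩
  rw [hT_adj] at hsurj ⊢
  exact LinearMap.injective_add_smulRight_of_surjective (A := (adjoint D : H →ₗ[ℂ] H)) hD_adj
    (innerSL ℂ f : H →ₗ[ℂ] ℂ) g hsurj

/-- **Theorem.** If `D` is diagonal with nonzero entries and `f, g` have all
Fourier coefficients nonzero, then `T = D + f ⊗ g` is left-invertible iff it is
invertible. -/
theorem leftInvertible_iff_invertible_diagonal_rankOne
    {H : Type*} [NormedAddCommGroup H] [InnerProductSpace ℂ H] [CompleteSpace H]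
    (e : HilbertBasis ℕ ℂ H) (α : ℕ → ℂ) (hα : ∀ n, α n ≠ 0)
    (D : H →L[ℂ] H) (hD : ∀ n, D (e n) = α n • e n)
    (f g : H)
    (hf : ∀ n, (inner ℂ (e n) f : ℂ) ≠ 0) (hg : ∀ n, (inner ℂ (e n) g : ℂ) ≠ 0) :
    (∃ S : H →L[ℂ] H, S ∘L (D + rankOne f g) = 1) ↔
      (∃ S : H →L[ℂ] H, S ∘L (D + rankOne f g) = 1 ∧ (D + rankOne f g) ∘L S = 1) :=
  leftInvertible_iff_invertible_diagonal_rankOne_general e α hα D hD f g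
end
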